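/- In the order topology on a linear order L, if a point x is a limit (from the right) of points in its own automorphism orbit, i.e., there is a strictly increasing sequence y_0 < y_1 < ⋯ converging to x with each y_i the image of x under some order-automorphism of L, then x is not contained in any scattered open neighborhood; in particular x has Cantor–Bendixson rank ∞ (x survives all Cantor–Bendixson derivatives). -/

import Mathlib

/-- The points of S that are limit points of S: the Cantor–Bendixson derivative of S. -/
def derivedWithin {X : Type*} [TopologicalSpace X] (S : Set X) : Set X :=
  {x | x ∈ S ∧ ∀ U : Set X, IsOpen U → x ∈ U → ∃ y, y ∈ U ∩ S ∧ y ≠ x}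

/-- The transfinitely iterated Cantor–Bendixson derivative of the whole space:
`cbIter X 0 = univ` and `cbIter X α = ⋂_{β < α} derivedWithin (cbIter X β)`. -/
noncomputable def cbIter (X : Type*) [TopologicalSpace X] : Ordinal → Set X
  | α => ⋂ β : Set.Iio α, derivedWithin (cbIter X β.1)
termination_by α => α
decreasing_by exact β.2

/-- A subset of a space is scattered if each of its nonempty subsets has a point
isolated in that subset. -/
def IsScatteredSet {X : Type*} [TopologicalSpace X] (A : Set X) : Prop :=
  ∀ S : Set X, S ⊆ A → S.Nonempty → ∃ z ∈ S, ∃ V : Set X, IsOpen V ∧ V ∩ S = {z}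

/-!
The orbit `O` of `x` under the order-automorphism group is dense in itself (`Preperfect`):
`x` is a limit of points `y n ≠ x` of `O`, and automorphisms are homeomorphisms of the order
topology, so every point of `O` is a limit of other points of `O`. A dense-in-itself set survives
every Cantor–Bendixson derivative, and its trace on an open set is a nonempty dense-in-itself
subset, which no scattered set contains.
-/

open Filter Set Topology Pointwise

section Preperfect

variable {X : Type*} [TopologicalSpace X] {S : Set X}

theorem Preperfect.subset_derivedWithin (hS : Preperfect S) : S ⊆ derivedWithin S :=
  fun z hz => ⟨hz, fun U hU hzU => preperfect_iff_nhds.1 hS z hz U (hU.mem_nhds hzU)⟩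

theorem Preperfect.subset_cbIter (hS : Preperfect S) (α : Ordinal) : S ⊆ cbIter X α := by
  induction α using WellFoundedLT.induction with
  | _ α ih =>
    intro z hz
    rw [cbIter]
    refine mem_iInter.2 fun ⟨β, hβ⟩ => ⟨ih β hβ hz, fun U hU hzU => ?_⟩
    obtain ⟨w, ⟨hwU, hwS⟩, hwz⟩ := (hS.subset_derivedWithin hz).2 U hU hzU
    exact ⟨w, ⟨hwU, ih β hβ hwS⟩, hwz⟩

theorem IsScatteredSet.eq_empty_of_preperfect {A : Set X} (hA : IsScatteredSet A)
    (hSA : S ⊆ A) (hS : Preperfect S) : S = ∅ := by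
  refine not_nonempty_iff_eq_empty.1 fun hne => ?_
  obtain ⟨z, hzS, V, hV, hVS⟩ := hA S hSA hne
  have hzV : z ∈ V := (hVS.ge (mem_singleton z)).1
  obtain ⟨w, hwVS, hwz⟩ := preperfect_iff_nhds.1 hS z hzS V (hV.mem_nhds hzV)
  exact hwz (hVS.le hwVS)

end Preperfect

theorem preperfect_orbit_of_accPt {G X : Type*} [Group G] [TopologicalSpace X] [MulAction G X]
    [ContinuousConstSMul G X] {x : X} (hx : AccPt x (𝓟 (MulAction.orbit G x))) :
    Preperfect (MulAction.orbit G x) := by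
  rintro _ ⟨g, rfl⟩
  refine accPt_iff_nhds.2 fun U hU => ?_
  have hU' : g⁻¹ • U ∈ 𝓝 x := by
    rwa [← smul_mem_nhds_smul_iff g, smul_inv_smul]
  obtain ⟨z, ⟨hzU, hzO⟩, hzx⟩ := accPt_iff_nhds.1 hx _ hU'
  exact ⟨g • z, ⟨mem_inv_smul_set_iff.1 hzU, MulAction.mem_orbit_of_mem_orbit g hzO⟩,
    (MulAction.injective g).ne hzx⟩

instance OrderIso.continuousConstSMul {α : Type*} [Preorder α] [TopologicalSpace α]
    [OrderTopology α] : ContinuousConstSMul (α ≃o α) α :=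
  ⟨OrderIso.continuous⟩

theorem rank_infinity_of_limit_of_orbit_general {L : Type*} [LinearOrder L]
    [TopologicalSpace L] [OrderTopology L] (x : L) (y : ℕ → L)
    (hlt : ∀ n, y n < x)
    (htend : Filter.Tendsto y Filter.atTop (nhds x))
    (horbit : ∀ n, ∃ f : L ≃o L, f x = y n) :
    (∀ U : Set L, IsOpen U → x ∈ U → ¬ IsScatteredSet U) ∧
    (∀ α : Ordinal, x ∈ cbIter L α) := by
  have hacc : AccPt x (𝓟 (MulAction.orbit (L ≃o L) x)) :=
    accPt_iff_frequently.2 <| htend.frequently <| Frequently.of_forall fun n =>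
      ⟨(hlt n).ne, MulAction.mem_orbit_iff.2 (horbit n)⟩
  have hO := preperfect_orbit_of_accPt hacc
  refine ⟨fun U hU hxU hU_scat => ?_, fun α => hO.subset_cbIter α (MulAction.mem_orbit_self x)⟩
  have hempty := hU_scat.eq_empty_of_preperfect inter_subset_left (hO.open_inter hU)
  exact hempty.subset ⟨hxU, MulAction.mem_orbit_self x⟩

/-- In the order topology on a linear order L, if a point x is a limit
from the right (i.e. from below, via a strictly increasing converging sequence) of
points in its own automorphism orbit, then x lies in no scattered open neighborhood,
and x survives every Cantor–Bendixson derivative (rank ∞). -/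
theorem rank_infinity_of_limit_of_orbit {L : Type*} [LinearOrder L]
    [TopologicalSpace L] [OrderTopology L] (x : L) (y : ℕ → L)
    (hmono : StrictMono y) (hlt : ∀ n, y n < x)
    (htend : Filter.Tendsto y Filter.atTop (nhds x))
    (horbit : ∀ n, ∃ f : L ≃o L, f x = y n) :
    (∀ U : Set L, IsOpen U → x ∈ U → ¬ IsScatteredSet U) ∧
    (∀ α : Ordinal, x ∈ cbIter L α) :=
  rank_infinity_of_limit_of_orbit_general x y hlt htend horbit
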